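/- arXiv:1303.4382 — 2 statements merged into one kernel-verified Lean document; each statement's English description precedes it below -/
import Mathlib

section
/- N-Talagrand inequality: Assume the metric measure space (X,d,m) satisfies CD^e(K,N) with K > 0 and that m ∈ P₂(X,d) (m is a probability measure with finite second moment). Then for every μ ∈ P₂(X,d,m): W₂(μ,m) ≤ (π/2)·√(N/K), and Ent(μ) ≥ −N·log cos(√(K/N)·W₂(μ,m)). -/
/-!
Apply `CD^e(K,N)` along a geodesic from `μ` to the reference measure `m` itself. Relative
entropies of probability measures are nonnegative, so `U_N ≤ 1` along the geodesic and
`U_N(m) = 1`. With `a = √(K/N) W₂(μ,m)` and `u = U_N(μ)` the inequality becomes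
`u sin((1-t)a) + sin(ta) ≤ sin a` for `t ∈ [0,1]`; it forces `a < π` (otherwise the distortion
coefficients are infinite), and then, letting `t → 1`, `u ≤ cos a`, which is both claims when
`μ` has finite entropy. A general `μ ∈ P₂(X,d,m)` is reached by truncating its density: the
normalized truncations have bounded density, hence finite entropy, and the bound on `W₂²`
passes to `μ` by coupling the truncated-away mass with `m` independently.
-/

open MeasureTheory Filter Set ENNReal

noncomputable section
open scoped Classical
/-- The function `𝔰_κ(θ)`. -/
def sK (κ θ : ℝ) : ℝ :=
  if 0 < κ then Real.sin (Real.sqrt κ * θ) / Real.sqrt κ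
  else if κ = 0 then θ
  else Real.sinh (Real.sqrt (-κ) * θ) / Real.sqrt (-κ)

/-- The function `𝔠_κ(θ)`. -/
def cK (κ θ : ℝ) : ℝ :=
  if 0 ≤ κ then Real.cos (Real.sqrt κ * θ)
  else Real.cosh (Real.sqrt (-κ) * θ)

/-- The distortion coefficient `σ_κ^{(t)}(θ)`, valued in `[0,∞]`. -/
def sigmaK (κ t θ : ℝ) : ℝ≥0∞ :=
  if κ * θ ^ 2 = 0 then ENNReal.ofReal t
  else if κ * θ ^ 2 < Real.pi ^ 2 then ENNReal.ofReal (sK κ (t * θ) / sK κ θ)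
  else ⊤

/-- `e_κ(t) = ∫₀ᵗ e^{κ s} ds`. -/
def eInt (κ t : ℝ) : ℝ := ∫ s in (0:ℝ)..t, Real.exp (κ * s)

section MetricPart

variable {X : Type*} [MetricSpace X]

/-- A constant-speed geodesic parametrized on `[0,1]`. -/
def IsUnitGeodesic (γ : ℝ → X) : Prop :=
  ∀ s ∈ Set.Icc (0:ℝ) 1, ∀ t ∈ Set.Icc (0:ℝ) 1,
    dist (γ s) (γ t) = |s - t| * dist (γ 0) (γ 1)

/-- A metric space is geodesic if every pair of points is joined by a
constant-speed geodesic. -/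
def GeodesicSpace (Y : Type*) [MetricSpace Y] : Prop :=
  ∀ x y : Y, ∃ γ : ℝ → Y, IsUnitGeodesic γ ∧ γ 0 = x ∧ γ 1 = y

/-- `U_N(x) = exp(-S(x)/N)` for a functional `S : X → (-∞,∞]`. -/
def UNof (N : ℝ) (S : X → EReal) (x : X) : ℝ :=
  if S x = ⊤ then 0 else Real.exp (-(S x).toReal / N)

/-- The `(K,N)`-convexity inequality along a given geodesic. -/
def KNConvexAlong (K N : ℝ) (S : X → EReal) (γ : ℝ → X) : Prop :=
  ∀ t ∈ Set.Icc (0:ℝ) 1,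
    sigmaK (K / N) (1 - t) (dist (γ 0) (γ 1)) * ENNReal.ofReal (UNof N S (γ 0)) +
      sigmaK (K / N) t (dist (γ 0) (γ 1)) * ENNReal.ofReal (UNof N S (γ 1)) ≤
    ENNReal.ofReal (UNof N S (γ t))

/-- `(K,N)`-convexity of a functional. -/
def KNConvex (K N : ℝ) (S : X → EReal) : Prop :=
  ∀ x₀ x₁ : X, S x₀ ≠ ⊤ → S x₁ ≠ ⊤ →
    ∃ γ : ℝ → X, IsUnitGeodesic γ ∧ γ 0 = x₀ ∧ γ 1 = x₁ ∧ KNConvexAlong K N S γ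

/-- Strong `(K,N)`-convexity: the inequality holds along every geodesic contained in
the proper domain of `S`. -/
def StronglyKNConvex (K N : ℝ) (S : X → EReal) : Prop :=
  ∀ γ : ℝ → X, IsUnitGeodesic γ → (∀ t ∈ Set.Icc (0:ℝ) 1, S (γ t) ≠ ⊤) →
    KNConvexAlong K N S γ

/-- Local absolute continuity of a curve on a set of times. -/
def LocACOn (x : ℝ → X) (I : Set ℝ) : Prop :=
  ∀ a b : ℝ, a ∈ I → b ∈ I → a ≤ b →
    ∃ g : ℝ → ℝ, IntegrableOn g (Set.Icc a b) ∧
      ∀ s t : ℝ, a ≤ s → s ≤ t → t ≤ b → dist (x s) (x t) ≤ ∫ r in Set.Icc s t, g r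

/-- The `EVI_{K,N}` differential inequality against an observer point `z`,
required at almost every positive time. -/
def EVIineq (K N : ℝ) (S : X → EReal) (x : ℝ → X) (z : X) : Prop :=
  ∀ᵐ t ∂(volume.restrict (Set.Ioi (0:ℝ))),
    ∃ D : ℝ, HasDerivAt (fun r : ℝ => sK (K / N) (dist (x r) z / 2) ^ 2) D t ∧
      D + K * sK (K / N) (dist (x t) z / 2) ^ 2 ≤
        N / 2 * (1 - UNof N S z / UNof N S (x t))

/-- `EVI_{K,N}` gradient flow of `S` starting in `x₀`. -/
def IsEVIFlow (K N : ℝ) (S : X → EReal) (x₀ : X) (x : ℝ → X) : Prop :=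
  x 0 = x₀ ∧ (∀ t : ℝ, 0 < t → S (x t) ≠ ⊤) ∧ LocACOn x (Set.Ioi 0) ∧
    Tendsto x (nhdsWithin 0 (Set.Ioi 0)) (nhds x₀) ∧
    ∀ z : X, S z ≠ ⊤ → EVIineq K N S x z

/-- The dimensional error term `(N/K)(1-e^{-K(s+t)})·(√t-√s)²/(2(s+t))`, with the
conventions `N(s+t)` for the prefactor when `K = 0` and value `0` when `s = t = 0`. -/
def eviErr (K N s t : ℝ) : ℝ :=
  if s = 0 ∧ t = 0 then 0
  else (if K = 0 then N * (s + t) else N / K * (1 - Real.exp (-K * (s + t)))) *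
    ((Real.sqrt t - Real.sqrt s) ^ 2 / (2 * (s + t)))

end MetricPart
section MeasurePart

variable {X : Type*} [MetricSpace X] [MeasurableSpace X]

/-- A probability measure has finite second moment. -/
def FiniteSecondMoment (μ : Measure X) : Prop :=
  ∃ x₀ : X, ∫⁻ x, ENNReal.ofReal (dist x₀ x ^ 2) ∂μ < ⊤

/-- `q` is a coupling of `μ` and `ν`. -/
def IsCoupling (μ ν : Measure X) (q : Measure (X × X)) : Prop :=
  q.map Prod.fst = μ ∧ q.map Prod.snd = ν

/-- The squared `L²`-Wasserstein distance. -/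
def W2sq (μ ν : Measure X) : ℝ≥0∞ :=
  ⨅ (q : Measure (X × X)) (_ : IsCoupling μ ν q),
    ∫⁻ p, ENNReal.ofReal (dist p.1 p.2 ^ 2) ∂q

/-- The `L²`-Wasserstein distance. -/
def W2 (μ ν : Measure X) : ℝ := Real.sqrt (W2sq μ ν).toReal

/-- The pointwise entropy density `ρ log ρ` of `μ` w.r.t. `m`. -/
def entDens (m μ : Measure X) (x : X) : ℝ :=
  (μ.rnDeriv m x).toReal * Real.log (μ.rnDeriv m x).toReal

/-- The relative entropy `Ent(μ | m) ∈ [-∞, +∞]`: it equals `∫ ρ log ρ dm` if `μ = ρ m`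
is absolutely continuous with `(ρ log ρ)₊` integrable, and `+∞` otherwise. -/
def Ent (m μ : Measure X) : EReal :=
  if μ ≪ m ∧ (∫⁻ x, ENNReal.ofReal (entDens m μ x) ∂m) < ⊤ then
    ((∫⁻ x, ENNReal.ofReal (entDens m μ x) ∂m : ℝ≥0∞) : EReal)
      - ((∫⁻ x, ENNReal.ofReal (-entDens m μ x) ∂m : ℝ≥0∞) : EReal)
  else ⊤

/-- `U_N(μ) = exp(-Ent(μ|m)/N)`, valued in `[0,∞]`. -/
def UNe (N : ℝ) (m μ : Measure X) : ℝ≥0∞ :=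
  if Ent m μ = ⊤ then 0
  else if Ent m μ = ⊥ then ⊤
  else ENNReal.ofReal (Real.exp (-(Ent m μ).toReal / N))

/-- Membership in `P₂(X,d)`. -/
def MemP2 (μ : Measure X) : Prop := IsProbabilityMeasure μ ∧ FiniteSecondMoment μ

/-- Membership in `P₂(X,d,m)`. -/
def MemP2ac (m μ : Measure X) : Prop := MemP2 μ ∧ μ ≪ m

/-- Membership in `P₂*(X,d,m)`: absolutely continuous with finite entropy. -/
def MemP2star (m μ : Measure X) : Prop := MemP2ac m μ ∧ Ent m μ ≠ ⊤ ∧ Ent m μ ≠ ⊥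

/-- Membership in `P_∞(X,d,m)`: absolutely continuous with bounded support. -/
def MemPinf (m μ : Measure X) : Prop :=
  MemP2ac m μ ∧ ∃ B : Set X, Bornology.IsBounded B ∧ μ Bᶜ = 0

/-- A constant-speed geodesic in the Wasserstein space, parametrized on `[0,1]`. -/
def IsW2Geodesic (μ : ℝ → Measure X) : Prop :=
  ∀ s ∈ Set.Icc (0:ℝ) 1, ∀ t ∈ Set.Icc (0:ℝ) 1,
    W2 (μ s) (μ t) = |s - t| * W2 (μ 0) (μ 1)

/-- The `CD^e(K,N)` entropy-convexity inequality at time `t` along a curve of measures. -/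
def CDeIneqAt (K N : ℝ) (m : Measure X) (μ : ℝ → Measure X) (t : ℝ) : Prop :=
  sigmaK (K / N) (1 - t) (W2 (μ 0) (μ 1)) * UNe N m (μ 0) +
    sigmaK (K / N) t (W2 (μ 0) (μ 1)) * UNe N m (μ 1) ≤ UNe N m (μ t)

/-- The entropic curvature-dimension condition `CD^e(K,N)`. -/
def CDe (K N : ℝ) (m : Measure X) : Prop :=
  ∀ μ₀ μ₁ : Measure X, MemP2star m μ₀ → MemP2star m μ₁ →
    ∃ μ : ℝ → Measure X, μ 0 = μ₀ ∧ μ 1 = μ₁ ∧ IsW2Geodesic μ ∧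
      (∀ t ∈ Set.Icc (0:ℝ) 1, MemP2star m (μ t)) ∧
      ∀ t ∈ Set.Icc (0:ℝ) 1, CDeIneqAt K N m μ t

/-- The strong entropic curvature-dimension condition: the `CD^e` inequality holds
along every Wasserstein geodesic in `P₂*(X,d,m)`. -/
def StrongCDe (K N : ℝ) (m : Measure X) : Prop :=
  ∀ μ : ℝ → Measure X, IsW2Geodesic μ → (∀ t ∈ Set.Icc (0:ℝ) 1, MemP2star m (μ t)) →
    ∀ t ∈ Set.Icc (0:ℝ) 1, CDeIneqAt K N m μ t

/-- The support of a measure. -/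
def measSupp (m : Measure X) : Set X := {x | ∀ U ∈ nhds x, m U ≠ 0}

end MeasurePart

open Topology

section Distortion

lemma sigmaK_eq_top {κ θ : ℝ} (h0 : κ * θ ^ 2 ≠ 0) (h : Real.pi ^ 2 ≤ κ * θ ^ 2) (t : ℝ) :
    sigmaK κ t θ = ⊤ := by
  rw [sigmaK, if_neg h0, if_neg h.not_gt]

lemma sigmaK_eq_ofReal_sin_div_sin {κ θ : ℝ} (hκ : 0 < κ) (hθ : 0 < θ)
    (h : κ * θ ^ 2 < Real.pi ^ 2) (t : ℝ) :
    sigmaK κ t θ =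
      ENNReal.ofReal (Real.sin (t * (√κ * θ)) / Real.sin (√κ * θ)) := by
  have hsqrt : √κ ≠ 0 := (Real.sqrt_pos.mpr hκ).ne'
  rw [sigmaK, if_neg (by positivity), if_pos h, sK, sK, if_pos hκ, if_pos hκ,
    div_div_div_cancel_right₀ hsqrt, mul_left_comm]

lemma le_cos_of_forall_mul_sin_add_sin_le {a u : ℝ} (ha : 0 < a) (haπ : a < Real.pi)
    (h : ∀ t ∈ Ioo (0 : ℝ) 1, u * Real.sin ((1 - t) * a) + Real.sin (t * a) ≤ Real.sin a) :
    u ≤ Real.cos a := by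
  set g : ℝ → ℝ := fun t => Real.cos ((1 + t) * (a / 2)) - u * Real.cos ((1 - t) * (a / 2))
  have hg : ∀ t ∈ Ioo (0 : ℝ) 1, 0 ≤ g t := by
    rintro t ⟨ht0, ht1⟩
    have hsin : 0 < Real.sin ((1 - t) * (a / 2)) :=
      Real.sin_pos_of_pos_of_lt_pi (by nlinarith) (by nlinarith)
    have hsub : Real.sin a - Real.sin (t * a) =
        2 * Real.sin ((1 - t) * (a / 2)) * Real.cos ((1 + t) * (a / 2)) := by
      rw [Real.sin_sub_sin]; ring_nf
    have hdouble : Real.sin ((1 - t) * a) =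
        2 * Real.sin ((1 - t) * (a / 2)) * Real.cos ((1 - t) * (a / 2)) := by
      rw [← Real.sin_two_mul]; ring_nf
    have hprod : 2 * Real.sin ((1 - t) * (a / 2)) * g t =
        Real.sin a - Real.sin (t * a) - u * Real.sin ((1 - t) * a) := by
      rw [hsub, hdouble]; ring
    have : 0 ≤ 2 * Real.sin ((1 - t) * (a / 2)) * g t := by linarith [h t ⟨ht0, ht1⟩]
    exact nonneg_of_mul_nonneg_right this (by positivity)
  have hlim : Tendsto g (𝓝[<] 1) (𝓝 (Real.cos a - u)) := by
    have hg1 : g 1 = Real.cos a - u := by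
      simp only [g]
      rw [show (1 + 1) * (a / 2) = a by ring, show (1 - 1) * (a / 2) = 0 by ring,
        Real.cos_zero, mul_one]
    rw [← hg1]
    exact ((show Continuous g by fun_prop).tendsto 1).mono_left nhdsWithin_le_nhds
  have hev : ∀ᶠ t in 𝓝[<] (1 : ℝ), 0 ≤ g t :=
    Filter.mem_of_superset (Ioo_mem_nhdsLT (by norm_num : (0 : ℝ) < 1)) hg
  linarith [ge_of_tendsto hlim hev]

lemma le_cos_of_sigmaK_le_one {κ θ u : ℝ} (hκ : 0 < κ) (hθ : 0 < θ) (hu : 0 < u)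
    (h : ∀ t ∈ Icc (0 : ℝ) 1, sigmaK κ (1 - t) θ * ENNReal.ofReal u + sigmaK κ t θ ≤ 1) :
    u ≤ Real.cos (√κ * θ) ∧ √κ * θ ≤ Real.pi / 2 := by
  set a := √κ * θ
  have hlt : κ * θ ^ 2 < Real.pi ^ 2 := by
    by_contra! hge
    have h1 := h 1 ⟨zero_le_one, le_rfl⟩
    rw [sigmaK_eq_top (by positivity) hge 1] at h1
    simp at h1
  have ha : 0 < a := by positivity
  have haπ : a < Real.pi := by
    have : a ^ 2 < Real.pi ^ 2 := by rwa [mul_pow, Real.sq_sqrt hκ.le]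
    exact lt_of_pow_lt_pow_left₀ 2 Real.pi_pos.le this
  have hcos : u ≤ Real.cos a := by
    refine le_cos_of_forall_mul_sin_add_sin_le ha haπ fun t ⟨ht0, ht1⟩ => ?_
    have hsa := Real.sin_pos_of_pos_of_lt_pi ha haπ
    have hs1 : 0 ≤ Real.sin ((1 - t) * a) :=
      Real.sin_nonneg_of_nonneg_of_le_pi (by nlinarith) (by nlinarith)
    have hs2 : 0 ≤ Real.sin (t * a) :=
      Real.sin_nonneg_of_nonneg_of_le_pi (by nlinarith) (by nlinarith)
    have ht := h t ⟨ht0.le, ht1.le⟩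
    rw [sigmaK_eq_ofReal_sin_div_sin hκ hθ hlt, sigmaK_eq_ofReal_sin_div_sin hκ hθ hlt,
      ← ENNReal.ofReal_mul (by positivity), ← ENNReal.ofReal_add (by positivity) (by positivity),
      ENNReal.ofReal_le_one, div_mul_eq_mul_div, ← add_div, div_le_one hsa] at ht
    linarith
  refine ⟨hcos, not_lt.mp fun hπ => ?_⟩
  linarith [Real.cos_nonpos_of_pi_div_two_le_of_le hπ.le (by linarith)]

end Distortion

section Entropy

variable {X : Type*} [MeasurableSpace X] {m μ : Measure X}

lemma measurable_entDens (m μ : Measure X) : Measurable (entDens m μ) :=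
  (Measure.measurable_rnDeriv μ m).ennreal_toReal.mul
    (Real.measurable_log.comp (Measure.measurable_rnDeriv μ m).ennreal_toReal)

lemma rnDeriv_toReal_sub_one_le_entDens (m μ : Measure X) (x : X) :
    (μ.rnDeriv m x).toReal - 1 ≤ entDens m μ x :=
  Real.self_sub_one_le_mul_log ENNReal.toReal_nonneg

lemma lintegral_ofReal_neg_entDens_lt_top [IsFiniteMeasure m] (μ : Measure X) :
    ∫⁻ x, ENNReal.ofReal (-entDens m μ x) ∂m < ⊤ := by
  calc ∫⁻ x, ENNReal.ofReal (-entDens m μ x) ∂m ≤ ∫⁻ _, 1 ∂m :=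
        lintegral_mono fun x => ENNReal.ofReal_le_one.mpr <| by
          linarith [rnDeriv_toReal_sub_one_le_entDens m μ x, (μ.rnDeriv m x).toReal_nonneg]
    _ < ⊤ := by simp

lemma integrable_of_lintegral_ofReal_lt_top {f : X → ℝ} (hf : Measurable f)
    (hpos : ∫⁻ x, ENNReal.ofReal (f x) ∂m < ⊤) (hneg : ∫⁻ x, ENNReal.ofReal (-f x) ∂m < ⊤) :
    Integrable f m := by
  refine ⟨hf.aestronglyMeasurable, ?_⟩
  rw [hasFiniteIntegral_iff_norm]
  calc ∫⁻ x, ENNReal.ofReal ‖f x‖ ∂m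
      = ∫⁻ x, (ENNReal.ofReal (f x) + ENNReal.ofReal (-f x)) ∂m := by
        refine lintegral_congr fun x => ?_
        rcases le_total 0 (f x) with h | h
        · simp [abs_of_nonneg h, ENNReal.ofReal_of_nonpos (neg_nonpos.mpr h)]
        · simp [abs_of_nonpos h, ENNReal.ofReal_of_nonpos h]
    _ < ⊤ := by
        rw [lintegral_add_left hf.ennreal_ofReal]
        exact ENNReal.add_lt_top.mpr ⟨hpos, hneg⟩

lemma Ent_eq_integral [IsFiniteMeasure m] (hac : μ ≪ m)
    (hpos : ∫⁻ x, ENNReal.ofReal (entDens m μ x) ∂m < ⊤) :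
    Ent m μ = ((∫ x, entDens m μ x ∂m : ℝ) : EReal) := by
  have hneg := lintegral_ofReal_neg_entDens_lt_top (m := m) μ
  rw [integral_eq_lintegral_pos_part_sub_lintegral_neg_part
      (integrable_of_lintegral_ofReal_lt_top (measurable_entDens m μ) hpos hneg),
    EReal.coe_sub, Ent, if_pos ⟨hac, hpos⟩, ← ENNReal.coe_toNNReal hpos.ne,
    ← ENNReal.coe_toNNReal hneg.ne]
  rfl

lemma Ent_ne_bot [IsFiniteMeasure m] : Ent m μ ≠ ⊥ := by
  by_cases h : μ ≪ m ∧ ∫⁻ x, ENNReal.ofReal (entDens m μ x) ∂m < ⊤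
  · rw [Ent_eq_integral h.1 h.2]
    exact EReal.coe_ne_bot _
  · rw [Ent, if_neg h]
    exact top_ne_bot

lemma Ent_nonneg [IsProbabilityMeasure m] [IsProbabilityMeasure μ] (hac : μ ≪ m) :
    0 ≤ Ent m μ := by
  by_cases hpos : ∫⁻ x, ENNReal.ofReal (entDens m μ x) ∂m < ⊤
  · have hint := integrable_of_lintegral_ofReal_lt_top (measurable_entDens m μ) hpos
      (lintegral_ofReal_neg_entDens_lt_top μ)
    have hmass : ∫ x, ((μ.rnDeriv m x).toReal - 1) ∂m = 0 := by
      rw [integral_sub Measure.integrable_toReal_rnDeriv (integrable_const 1),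
        Measure.integral_toReal_rnDeriv hac]
      simp
    rw [Ent_eq_integral hac hpos, ← EReal.coe_zero, ← hmass]
    exact EReal.coe_le_coe_iff.mpr <| integral_mono
      (Measure.integrable_toReal_rnDeriv.sub (integrable_const 1)) hint
      (rnDeriv_toReal_sub_one_le_entDens m μ)
  · rw [Ent, if_neg fun h => hpos h.2]
    exact le_top

lemma Ent_self [IsFiniteMeasure m] : Ent m m = 0 := by
  have hzero : entDens m m =ᵐ[m] 0 :=
    (Measure.rnDeriv_self m).mono fun x hx => by simp [entDens, hx]
  have hpos : ∫⁻ x, ENNReal.ofReal (entDens m m x) ∂m = 0 := by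
    rw [lintegral_congr_ae (hzero.mono fun x hx => by rw [hx, Pi.zero_apply, ofReal_zero]),
      lintegral_zero]
  rw [Ent_eq_integral Measure.AbsolutelyContinuous.rfl (by simp [hpos]), integral_congr_ae hzero]
  simp

lemma UNe_of_Ent_eq_coe {ν : Measure X} {r : ℝ} (h : Ent m ν = r) (N : ℝ) :
    UNe N m ν = ENNReal.ofReal (Real.exp (-r / N)) := by
  rw [UNe, h, if_neg (EReal.coe_ne_top r), if_neg (EReal.coe_ne_bot r), EReal.toReal_coe]

lemma UNe_le_one [IsProbabilityMeasure m] [IsProbabilityMeasure μ] (hac : μ ≪ m) {N : ℝ}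
    (hN : 0 ≤ N) : UNe N m μ ≤ 1 := by
  by_cases htop : Ent m μ = ⊤
  · rw [UNe, if_pos htop]
    exact zero_le_one
  have hcoe := (EReal.coe_toReal htop Ent_ne_bot).symm
  have hnonneg : 0 ≤ (Ent m μ).toReal := EReal.toReal_nonneg (Ent_nonneg hac)
  rw [UNe_of_Ent_eq_coe hcoe, ENNReal.ofReal_le_one, Real.exp_le_one_iff, neg_div,
    neg_nonpos]
  positivity

end Entropy

lemma dist_sq_le_two_mul_add {X : Type*} [PseudoMetricSpace X] (y a b : X) :
    dist a b ^ 2 ≤ 2 * dist y a ^ 2 + 2 * dist y b ^ 2 := by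
  nlinarith [dist_triangle_left a b y, dist_nonneg (x := a) (y := b),
    sq_nonneg (dist y a - dist y b)]

lemma ofReal_dist_sq_le_two_mul_add {X : Type*} [PseudoMetricSpace X] (y a b : X) :
    ENNReal.ofReal (dist a b ^ 2) ≤
      2 * ENNReal.ofReal (dist y a ^ 2) + 2 * ENNReal.ofReal (dist y b ^ 2) := by
  rw [← ENNReal.ofReal_ofNat 2, ← ENNReal.ofReal_mul zero_le_two, ← ENNReal.ofReal_mul zero_le_two,
    ← ENNReal.ofReal_add (by positivity) (by positivity)]
  exact ENNReal.ofReal_le_ofReal (dist_sq_le_two_mul_add y a b)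

lemma isCoupling_prod {X : Type*} [MeasurableSpace X] {μ ν : Measure X} [IsProbabilityMeasure μ]
    [IsProbabilityMeasure ν] : IsCoupling μ ν (μ.prod ν) := by
  simp [IsCoupling]

section Wasserstein

variable {X : Type*} [MetricSpace X] [MeasurableSpace X] {μ ν : Measure X}

lemma FiniteSecondMoment.lintegral_lt_top [IsFiniteMeasure ν] (h : FiniteSecondMoment ν)
    (y : X) : ∫⁻ x, ENNReal.ofReal (dist y x ^ 2) ∂ν < ⊤ := by
  obtain ⟨x₀, hx₀⟩ := h
  calc ∫⁻ x, ENNReal.ofReal (dist y x ^ 2) ∂ν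
      ≤ ∫⁻ x, (2 * ENNReal.ofReal (dist x₀ y ^ 2) + 2 * ENNReal.ofReal (dist x₀ x ^ 2)) ∂ν :=
        lintegral_mono fun x => ofReal_dist_sq_le_two_mul_add x₀ y x
    _ = 2 * ENNReal.ofReal (dist x₀ y ^ 2) * ν univ +
          2 * ∫⁻ x, ENNReal.ofReal (dist x₀ x ^ 2) ∂ν := by
        rw [lintegral_add_left measurable_const, lintegral_const,
          lintegral_const_mul' _ _ ENNReal.ofNat_ne_top]
    _ < ⊤ := by
        have := measure_lt_top ν univ
        finiteness

lemma lintegral_dist_sq_prod_le [OpensMeasurableSpace X] (μ ν : Measure X) [SFinite μ]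
    [SFinite ν] (y : X) :
    ∫⁻ p, ENNReal.ofReal (dist p.1 p.2 ^ 2) ∂(μ.prod ν) ≤
      2 * (ν univ * ∫⁻ x, ENNReal.ofReal (dist y x ^ 2) ∂μ) +
        2 * (μ univ * ∫⁻ x, ENNReal.ofReal (dist y x ^ 2) ∂ν) := by
  have hmeas : Measurable fun x : X => ENNReal.ofReal (dist y x ^ 2) := by fun_prop
  calc ∫⁻ p, ENNReal.ofReal (dist p.1 p.2 ^ 2) ∂(μ.prod ν)
      ≤ ∫⁻ p : X × X, (2 * ENNReal.ofReal (dist y p.1 ^ 2) +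
          2 * ENNReal.ofReal (dist y p.2 ^ 2)) ∂(μ.prod ν) :=
        lintegral_mono fun p => ofReal_dist_sq_le_two_mul_add y p.1 p.2
    _ = 2 * (ν univ * ∫⁻ x, ENNReal.ofReal (dist y x ^ 2) ∂μ) +
          2 * (μ univ * ∫⁻ x, ENNReal.ofReal (dist y x ^ 2) ∂ν) := by
        rw [lintegral_add_left (by fun_prop),
          lintegral_const_mul' _ _ ENNReal.ofNat_ne_top,
          lintegral_const_mul' _ _ ENNReal.ofNat_ne_top,
          ← lintegral_map hmeas measurable_fst, ← lintegral_map hmeas measurable_snd,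
          Measure.map_fst_prod, Measure.map_snd_prod, lintegral_smul_measure,
          lintegral_smul_measure, smul_eq_mul, smul_eq_mul]

lemma W2sq_le_lintegral {q : Measure (X × X)} (hq : IsCoupling μ ν q) :
    W2sq μ ν ≤ ∫⁻ p, ENNReal.ofReal (dist p.1 p.2 ^ 2) ∂q :=
  iInf₂_le q hq

lemma W2sq_lt_top [OpensMeasurableSpace X] [IsProbabilityMeasure μ] [IsProbabilityMeasure ν]
    (hμ : FiniteSecondMoment μ) (hν : FiniteSecondMoment ν) : W2sq μ ν < ⊤ := by
  obtain ⟨y, hy⟩ := hμ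
  refine (W2sq_le_lintegral isCoupling_prod).trans_lt
    ((lintegral_dist_sq_prod_le μ ν y).trans_lt ?_)
  have := hν.lintegral_lt_top y
  simp only [measure_univ, one_mul]
  finiteness

lemma W2_nonneg : 0 ≤ W2 μ ν := Real.sqrt_nonneg _

lemma W2sq_eq_ofReal_W2_sq (h : W2sq μ ν ≠ ⊤) : W2sq μ ν = ENNReal.ofReal (W2 μ ν ^ 2) := by
  rw [W2, Real.sq_sqrt ENNReal.toReal_nonneg, ENNReal.ofReal_toReal h]

lemma W2_le_of_W2sq_le {C : ℝ} (hC : 0 ≤ C) (h : W2sq μ ν ≤ ENNReal.ofReal (C ^ 2)) :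
    W2 μ ν ≤ C := by
  rw [W2, Real.sqrt_le_left hC]
  exact ENNReal.toReal_le_of_le_ofReal (by positivity) h

lemma W2sq_smul_add_le {m μ₁ : Measure X} [IsProbabilityMeasure m] [SFinite ν] {c : ℝ≥0∞}
    (hc₀ : c ≠ 0) (hc : c + ν univ = 1) :
    W2sq (c • μ₁ + ν) m ≤
      c * W2sq μ₁ m + ∫⁻ p, ENNReal.ofReal (dist p.1 p.2 ^ 2) ∂(ν.prod m) := by
  have hc_top : c ≠ ⊤ := ne_top_of_le_ne_top ENNReal.one_ne_top (hc ▸ le_self_add)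
  conv_rhs => rw [W2sq, ENNReal.mul_iInf_of_ne hc₀ hc_top, ENNReal.iInf_add]
  refine le_iInf fun q => ?_
  rw [ENNReal.mul_iInf_of_ne hc₀ hc_top, ENNReal.iInf_add]
  refine le_iInf fun hq => ?_
  have hcoupling : IsCoupling (c • μ₁ + ν) m (c • q + ν.prod m) := by
    constructor
    · rw [Measure.map_add _ _ measurable_fst, Measure.map_smul, hq.1, Measure.map_fst_prod,
        measure_univ, one_smul]
    · rw [Measure.map_add _ _ measurable_snd, Measure.map_smul, hq.2, Measure.map_snd_prod,
        ← add_smul, hc, one_smul]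
  refine (W2sq_le_lintegral hcoupling).trans_eq ?_
  rw [lintegral_add_measure, lintegral_smul_measure, smul_eq_mul]

end Wasserstein

section Truncation

variable {X : Type*} [MeasurableSpace X] {m : Measure X}

lemma tendsto_lintegral_sub_min_mul {ρ g : X → ℝ≥0∞} (hρ : Measurable ρ)
    (hρ_lt : ∀ᵐ x ∂m, ρ x < ⊤) (hg : Measurable g) (hfin : ∫⁻ x, ρ x * g x ∂m ≠ ⊤) :
    Tendsto (fun n : ℕ => ∫⁻ x, (ρ x - min (ρ x) n) * g x ∂m) atTop (𝓝 0) := by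
  have hlim : ∀ᵐ x ∂m, Tendsto (fun n : ℕ => (ρ x - min (ρ x) n) * g x) atTop (𝓝 0) := by
    filter_upwards [hρ_lt] with x hx
    obtain ⟨n₀, hn₀⟩ := ENNReal.exists_nat_gt hx.ne
    refine tendsto_const_nhds.congr' ?_
    filter_upwards [eventually_ge_atTop n₀] with n hn
    rw [min_eq_left (hn₀.le.trans (by exact_mod_cast hn)), tsub_self, zero_mul]
  have := tendsto_lintegral_of_dominated_convergence _
    (fun n => (hρ.sub (hρ.min measurable_const)).mul hg)
    (fun n => Eventually.of_forall fun x => mul_le_mul_left tsub_le_self _) hfin hlim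
  rwa [lintegral_zero] at this

variable [MetricSpace X] [OpensMeasurableSpace X]

lemma memP2star_withDensity_of_le [IsFiniteMeasure m] {f : X → ℝ≥0∞} {M : ℝ≥0∞}
    (hf : Measurable f) (hfM : ∀ x, f x ≤ M) (hM : M ≠ ⊤) (h1 : ∫⁻ x, f x ∂m = 1) (x₀ : X)
    (h2 : ∫⁻ x, f x * ENNReal.ofReal (dist x₀ x ^ 2) ∂m < ⊤) :
    MemP2star m (m.withDensity f) := by
  have hprob : IsProbabilityMeasure (m.withDensity f) :=
    ⟨by rw [withDensity_apply _ MeasurableSet.univ, setLIntegral_univ, h1]⟩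
  have hac := withDensity_absolutelyContinuous m f
  have hmoment : FiniteSecondMoment (m.withDensity f) :=
    ⟨x₀, by rwa [lintegral_withDensity_eq_lintegral_mul m hf (by fun_prop)]⟩
  have hpos : ∫⁻ x, ENNReal.ofReal (entDens m (m.withDensity f) x) ∂m < ⊤ := by
    have hbound : ∀ᵐ x ∂m,
        ENNReal.ofReal (entDens m (m.withDensity f) x) ≤ ENNReal.ofReal (M.toReal ^ 2) := by
      filter_upwards [Measure.rnDeriv_withDensity m hf] with x hx
      have h0 : 0 ≤ (f x).toReal := ENNReal.toReal_nonneg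
      refine ENNReal.ofReal_le_ofReal ?_
      rw [entDens, hx]
      calc (f x).toReal * Real.log (f x).toReal ≤ (f x).toReal ^ 2 := by
            nlinarith [Real.log_le_self h0]
        _ ≤ M.toReal ^ 2 := pow_le_pow_left₀ h0 (ENNReal.toReal_mono hM (hfM x)) 2
    refine (lintegral_mono_ae hbound).trans_lt ?_
    rw [lintegral_const]
    exact ENNReal.mul_lt_top ENNReal.ofReal_lt_top (measure_lt_top m _)
  rw [MemP2star, Ent_eq_integral hac hpos]
  exact ⟨⟨⟨hprob, hmoment⟩, hac⟩, EReal.coe_ne_top _, EReal.coe_ne_bot _⟩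

lemma memP2star_withDensity_inv_smul [IsFiniteMeasure m] {f : X → ℝ≥0∞} {M : ℝ≥0∞}
    (hf : Measurable f) (hfM : ∀ x, f x ≤ M) (hM : M ≠ ⊤) (hc₀ : ∫⁻ x, f x ∂m ≠ 0)
    (hc_top : ∫⁻ x, f x ∂m ≠ ⊤) (x₀ : X)
    (h2 : ∫⁻ x, f x * ENNReal.ofReal (dist x₀ x ^ 2) ∂m < ⊤) :
    MemP2star m (m.withDensity ((∫⁻ x, f x ∂m)⁻¹ • f)) := by
  have hinv_top : (∫⁻ x, f x ∂m)⁻¹ ≠ ⊤ := ENNReal.inv_ne_top.mpr hc₀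
  refine memP2star_withDensity_of_le (hf.const_smul _) (fun x => mul_le_mul' le_rfl (hfM x))
    (ENNReal.mul_ne_top hinv_top hM) ?_ x₀ ?_
  · simp only [Pi.smul_apply, smul_eq_mul]
    rw [lintegral_const_mul _ hf, ENNReal.inv_mul_cancel hc₀ hc_top]
  · simp only [Pi.smul_apply, smul_eq_mul, mul_assoc]
    rw [lintegral_const_mul' _ _ hinv_top]
    exact ENNReal.mul_lt_top hinv_top.lt_top h2

/- `μ = m.withDensity ρ` is split as `c • μₙ + (excess)` with `μₙ` the normalized truncation
`min ρ n`; the two error terms bound the cost of coupling the excess with `m` independently. -/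
lemma W2sq_withDensity_le_add [IsProbabilityMeasure m] {ρ : X → ℝ≥0∞} (hρ : Measurable ρ)
    (hρ1 : ∫⁻ x, ρ x ∂m = 1) (x₀ : X)
    (hρ2 : ∫⁻ x, ρ x * ENNReal.ofReal (dist x₀ x ^ 2) ∂m < ⊤) {C : ℝ≥0∞}
    (hC : ∀ ν, MemP2star m ν → W2sq ν m ≤ C) {n : ℕ} (hn : ∫⁻ x, (ρ x - min (ρ x) n) ∂m < 1) :
    W2sq (m.withDensity ρ) m ≤
      C + (2 * ∫⁻ x, (ρ x - min (ρ x) n) * ENNReal.ofReal (dist x₀ x ^ 2) ∂m +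
        2 * ((∫⁻ x, (ρ x - min (ρ x) n) ∂m) * ∫⁻ x, ENNReal.ofReal (dist x₀ x ^ 2) ∂m)) := by
  set f : X → ℝ≥0∞ := fun x => min (ρ x) n
  set r : X → ℝ≥0∞ := fun x => ρ x - f x
  set c := ∫⁻ x, f x ∂m
  have hf : Measurable f := hρ.min measurable_const
  have hr : Measurable r := hρ.sub hf
  have hfr : f + r = ρ := funext fun x => add_tsub_cancel_of_le (min_le_left _ _)
  have hcr : c + ∫⁻ x, r x ∂m = 1 := by
    rw [← lintegral_add_left hf, ← hρ1]
    exact lintegral_congr fun x => congrFun hfr x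
  have hc₀ : c ≠ 0 := fun h => by rw [h, zero_add] at hcr; exact hn.ne hcr
  have hc_top : c ≠ ⊤ := ne_top_of_le_ne_top ENNReal.one_ne_top (hcr ▸ le_self_add)
  have hdecomp : m.withDensity ρ = c • m.withDensity (c⁻¹ • f) + m.withDensity r := by
    rw [← withDensity_smul' _ _ hc_top, smul_smul, ENNReal.mul_inv_cancel hc₀ hc_top, one_smul,
      ← withDensity_add_left hf, hfr]
  have hstar : MemP2star m (m.withDensity (c⁻¹ • f)) :=
    memP2star_withDensity_inv_smul hf (fun x => min_le_right _ _) (ENNReal.natCast_ne_top n)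
      hc₀ hc_top x₀ ((lintegral_mono fun x => mul_le_mul_left (min_le_left _ _) _).trans_lt hρ2)
  have hmass : c + m.withDensity r univ = 1 := by
    rwa [withDensity_apply _ MeasurableSet.univ, setLIntegral_univ]
  calc W2sq (m.withDensity ρ) m
      ≤ c * W2sq (m.withDensity (c⁻¹ • f)) m +
          ∫⁻ p, ENNReal.ofReal (dist p.1 p.2 ^ 2) ∂((m.withDensity r).prod m) :=
        hdecomp ▸ W2sq_smul_add_le hc₀ hmass
    _ ≤ 1 * C + (2 * (m univ * ∫⁻ x, ENNReal.ofReal (dist x₀ x ^ 2) ∂(m.withDensity r)) +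
          2 * (m.withDensity r univ * ∫⁻ x, ENNReal.ofReal (dist x₀ x ^ 2) ∂m)) := by
        gcongr
        · exact hcr ▸ le_self_add
        · exact hC _ hstar
        · exact lintegral_dist_sq_prod_le _ _ x₀
    _ = _ := by
        rw [one_mul, measure_univ, one_mul, lintegral_withDensity_eq_lintegral_mul _ hr
          (by fun_prop), withDensity_apply _ MeasurableSet.univ, setLIntegral_univ]
        rfl

lemma W2sq_le_of_forall_memP2star [IsProbabilityMeasure m] (hm : FiniteSecondMoment m)
    {μ : Measure X} (hμ : MemP2ac m μ) {C : ℝ≥0∞} (hC : ∀ ν, MemP2star m ν → W2sq ν m ≤ C) :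
    W2sq μ m ≤ C := by
  obtain ⟨⟨hprob, hμ2⟩, hac⟩ := hμ
  obtain ⟨x₀, hm2⟩ := hm
  set ρ := μ.rnDeriv m
  have hρ : Measurable ρ := Measure.measurable_rnDeriv μ m
  have hwd : m.withDensity ρ = μ := Measure.withDensity_rnDeriv_eq μ m hac
  have hρ1 : ∫⁻ x, ρ x ∂m = 1 := by
    rw [← setLIntegral_univ, ← withDensity_apply _ MeasurableSet.univ, hwd, measure_univ]
  have hρ2 : ∫⁻ x, ρ x * ENNReal.ofReal (dist x₀ x ^ 2) ∂m < ⊤ := by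
    have := hμ2.lintegral_lt_top x₀
    rwa [← hwd, lintegral_withDensity_eq_lintegral_mul _ hρ (by fun_prop)] at this
  have hexcess : Tendsto (fun n : ℕ => ∫⁻ x, (ρ x - min (ρ x) n) ∂m) atTop (𝓝 0) := by
    simpa using tendsto_lintegral_sub_min_mul hρ (Measure.rnDeriv_lt_top μ m) measurable_const
      (g := 1) (by simp [hρ1])
  have hexcess2 := tendsto_lintegral_sub_min_mul hρ (Measure.rnDeriv_lt_top μ m)
    (by fun_prop) hρ2.ne
  have htail : Tendsto (fun n : ℕ => C +
      (2 * ∫⁻ x, (ρ x - min (ρ x) n) * ENNReal.ofReal (dist x₀ x ^ 2) ∂m +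
        2 * ((∫⁻ x, (ρ x - min (ρ x) n) ∂m) * ∫⁻ x, ENNReal.ofReal (dist x₀ x ^ 2) ∂m)))
      atTop (𝓝 C) := by
    have h2 : (2 : ℝ≥0∞) ≠ ⊤ := ENNReal.ofNat_ne_top
    have h := tendsto_const_nhds (x := C) |>.add
      ((ENNReal.Tendsto.const_mul hexcess2 (Or.inr h2)).add
        (ENNReal.Tendsto.const_mul (ENNReal.Tendsto.mul_const hexcess (Or.inr hm2.ne))
          (Or.inr h2)))
    simpa using h
  rw [← hwd]
  refine ge_of_tendsto htail ?_
  filter_upwards [hexcess.eventually_lt_const zero_lt_one] with n hn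
  exact W2sq_withDensity_le_add hρ hρ1 x₀ hρ2 hC hn

lemma W2_le_of_forall_memP2star [IsProbabilityMeasure m] (hm : FiniteSecondMoment m)
    {μ : Measure X} (hμ : MemP2ac m μ) {C : ℝ} (hC₀ : 0 ≤ C)
    (hC : ∀ ν, MemP2star m ν → W2 ν m ≤ C) : W2 μ m ≤ C := by
  refine W2_le_of_W2sq_le hC₀ (W2sq_le_of_forall_memP2star hm hμ fun ν hν => ?_)
  have := hν.1.1.1
  rw [W2sq_eq_ofReal_W2_sq (W2sq_lt_top hν.1.1.2 hm).ne]
  exact ENNReal.ofReal_le_ofReal (pow_le_pow_left₀ W2_nonneg (hC ν hν) 2)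

end Truncation

section Talagrand

variable {X : Type*} [MetricSpace X] [MeasurableSpace X] {m : Measure X} {K N : ℝ}

lemma memP2star_self [IsProbabilityMeasure m] (hm : FiniteSecondMoment m) : MemP2star m m :=
  ⟨⟨⟨inferInstance, hm⟩, Measure.AbsolutelyContinuous.rfl⟩, by simp [Ent_self], by simp [Ent_self]⟩

lemma CDe.sigmaK_mul_UNe_add_sigmaK_le_one [IsProbabilityMeasure m]
    (hm : FiniteSecondMoment m) (hN : 0 ≤ N) (hCD : CDe K N m) {μ₀ : Measure X}
    (hμ₀ : MemP2star m μ₀) {t : ℝ} (ht : t ∈ Icc (0 : ℝ) 1) :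
    sigmaK (K / N) (1 - t) (W2 μ₀ m) * UNe N m μ₀ + sigmaK (K / N) t (W2 μ₀ m) ≤ 1 := by
  obtain ⟨ν, h0, h1, -, hν, hineq⟩ := hCD μ₀ m hμ₀ (memP2star_self hm)
  have hUm : UNe N m m = 1 := by
    rw [UNe_of_Ent_eq_coe (r := 0) (by rw [Ent_self, EReal.coe_zero]) N]
    simp
  have h := hineq t ht
  rw [CDeIneqAt, h0, h1, hUm, mul_one] at h
  have := (hν t ht).1.1.1
  exact h.trans (UNe_le_one (hν t ht).1.2 hN)

lemma CDe.exp_neg_ent_le_cos [IsProbabilityMeasure m] (hm : FiniteSecondMoment m)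
    (hK : 0 < K) (hN : 0 < N) (hCD : CDe K N m) {μ₀ : Measure X} (hμ₀ : MemP2star m μ₀) :
    Real.exp (-(Ent m μ₀).toReal / N) ≤ Real.cos (√(K / N) * W2 μ₀ m) ∧
      √(K / N) * W2 μ₀ m ≤ Real.pi / 2 := by
  have hκ : 0 < K / N := div_pos hK hN
  set θ := W2 μ₀ m
  set u := Real.exp (-(Ent m μ₀).toReal / N)
  have := hμ₀.1.1.1
  have hu1 : u ≤ 1 := by
    rw [Real.exp_le_one_iff, neg_div, neg_nonpos]
    exact div_nonneg (EReal.toReal_nonneg (Ent_nonneg hμ₀.1.2)) hN.le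
  have hσ : ∀ t ∈ Icc (0 : ℝ) 1,
      sigmaK (K / N) (1 - t) θ * ENNReal.ofReal u + sigmaK (K / N) t θ ≤ 1 := fun t ht => by
    simpa only [UNe_of_Ent_eq_coe (EReal.coe_toReal hμ₀.2.1 hμ₀.2.2).symm] using
      hCD.sigmaK_mul_UNe_add_sigmaK_le_one hm hN.le hμ₀ ht
  rcases (W2_nonneg : 0 ≤ θ).eq_or_lt with hθ | hθ
  · rw [show θ = 0 from hθ.symm, mul_zero, Real.cos_zero]
    exact ⟨hu1, by positivity⟩
  exact le_cos_of_sigmaK_le_one hκ hθ (Real.exp_pos _) hσ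

lemma CDe.talagrand_of_memP2star [IsProbabilityMeasure m] (hm : FiniteSecondMoment m)
    (hK : 0 < K) (hN : 0 < N) (hCD : CDe K N m) {μ₀ : Measure X} (hμ₀ : MemP2star m μ₀) :
    W2 μ₀ m ≤ Real.pi / 2 * √(N / K) ∧
      ((-(N * Real.log (Real.cos (√(K / N) * W2 μ₀ m))) : ℝ) : EReal) ≤ Ent m μ₀ := by
  obtain ⟨hcos, hπ⟩ := hCD.exp_neg_ent_le_cos hm hK hN hμ₀
  constructor
  · have h := (le_div_iff₀' (Real.sqrt_pos.mpr (div_pos hK hN))).mpr hπ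
    rwa [div_eq_mul_inv, ← Real.sqrt_inv, inv_div] at h
  · have hlog := Real.log_le_log (Real.exp_pos _) hcos
    rw [Real.log_exp, div_le_iff₀ hN] at hlog
    rw [← EReal.coe_toReal hμ₀.2.1 hμ₀.2.2, EReal.coe_le_coe_iff]
    linarith

end Talagrand

theorem N_talagrand_general
    {X : Type*} [MetricSpace X]
    [MeasurableSpace X] [BorelSpace X]
    (m : Measure X)
    [IsProbabilityMeasure m] (hm : FiniteSecondMoment m)
    (K N : ℝ) (hK : 0 < K) (hN : 0 < N) (hCD : CDe K N m)
    (μ : Measure X) (hμ : MemP2ac m μ) :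
    W2 μ m ≤ Real.pi / 2 * Real.sqrt (N / K) ∧
    ((-(N * Real.log (Real.cos (Real.sqrt (K / N) * W2 μ m))) : ℝ) : EReal) ≤
      Ent m μ := by
  refine ⟨W2_le_of_forall_memP2star hm hμ (by positivity) fun ν hν =>
    (hCD.talagrand_of_memP2star hm hK hN hν).1, ?_⟩
  by_cases htop : Ent m μ = ⊤
  · exact htop ▸ le_top
  · exact (hCD.talagrand_of_memP2star hm hK hN ⟨hμ, htop, Ent_ne_bot⟩).2

/-- **Corollary (N-Talagrand inequality).**
If `(X,d,m)` satisfies `CD^e(K,N)` with `K > 0` and `m` is a probability measure with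
finite second moment, then every `μ ∈ P₂(X,d,m)` satisfies
`W₂(μ,m) ≤ (π/2) √(N/K)` and `Ent(μ) ≥ -N log cos(√(K/N) W₂(μ,m))`. -/
theorem N_talagrand
    {X : Type*} [MetricSpace X] [CompleteSpace X] [SecondCountableTopology X]
    [MeasurableSpace X] [BorelSpace X]
    (m : Measure X) [IsLocallyFiniteMeasure m] [SigmaFinite m]
    [IsProbabilityMeasure m] (hm : FiniteSecondMoment m)
    (K N : ℝ) (hK : 0 < K) (hN : 0 < N) (hCD : CDe K N m)
    (μ : Measure X) (hμ : MemP2ac m μ) :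
    W2 μ m ≤ Real.pi / 2 * Real.sqrt (N / K) ∧
    ((-(N * Real.log (Real.cos (Real.sqrt (K / N) * W2 μ m))) : ℝ) : EReal) ≤
      Ent m μ :=
  N_talagrand_general m hm K N hK hN hCD μ hμ
end
end

section
/- For every fixed t ∈ [0,1], the function G_t : ℝ × ℝ × (−∞, π²) → ℝ defined by G_t(x, y, κ) = log[σ_κ^{(1−t)}(1)·e^x + σ_κ^{(t)}(1)·e^y] is convex (jointly in the three variables). -/
open MeasureTheory Filter Set ENNReal

noncomputable section
open scoped Classical

/-- The distortion coefficient `σ_κ^{(t)}(1)`, real-valued (finite for `κ < π²`). -/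
def sigmaR (κ t : ℝ) : ℝ := if κ = 0 then t else sK κ t / sK κ 1

/-!
Euler's product `sin (π z) = π z ∏ (1 - z² / j²)`, applied to `z = w θ / π` with `w² = κ`
(`w = √κ` or `w = i √(-κ)`), gives for `κ < π²` and `0 < s ≤ 1`
`σ_κ^{(s)}(1) = lim s ∏_{j ≤ n} (j² π² - s² κ) / (j² π² - κ)`.
Every factor is log-convex in `κ`, so `κ ↦ log σ_κ^{(s)}(1)` is convex as a pointwise limit of
convex functions. Hence
`G_t(x, y, κ) = log (exp (x + log σ_κ^{(1-t)}(1)) + exp (y + log σ_κ^{(t)}(1)))`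
is a log-sum-exp of two convex functions, which is convex by Hölder's inequality. At `t = 0` and
`t = 1` one coefficient vanishes and `G_t` is a coordinate projection.
-/

open Real Topology

lemma sub_mul_pos_of_lt {c q κ : ℝ} (hc : 0 < c) (hq0 : 0 ≤ q) (hq1 : q ≤ 1) (hκ : κ < c) :
    0 < c - q * κ := by
  rcases le_or_gt κ 0 with hκ0 | hκ0
  · linarith [mul_nonpos_of_nonneg_of_nonpos hq0 hκ0]
  · linarith [mul_le_of_le_one_left hκ0.le hq1]

-- The derivative is `c (1 - q) / ((c - κ) (c - q κ))`, increasing on `(-∞, c)`.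
lemma convexOn_log_div_sub {c q : ℝ} (hc : 0 < c) (hq0 : 0 ≤ q) (hq1 : q ≤ 1) :
    ConvexOn ℝ (Iio c) fun κ => Real.log ((c - q * κ) / (c - κ)) := by
  have hderiv : ∀ κ ∈ Iio c, HasDerivAt (fun κ => Real.log (c - q * κ) - Real.log (c - κ))
      (c * (1 - q) / ((c - κ) * (c - q * κ))) κ := by
    intro κ hκ
    have hqκ := sub_mul_pos_of_lt hc hq0 hq1 hκ
    have hκ' : 0 < c - κ := sub_pos.2 hκ
    have h := (((hasDerivAt_id κ).const_mul q).const_sub c).log hqκ.ne' |>.sub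
      (((hasDerivAt_id κ).const_sub c).log hκ'.ne')
    refine h.congr_deriv ?_
    simp only [id]
    field_simp
    ring
  have hconvex : ConvexOn ℝ (Iio c) fun κ => Real.log (c - q * κ) - Real.log (c - κ) := by
    refine MonotoneOn.convexOn_of_deriv (convex_Iio c)
      (fun κ hκ => (hderiv κ hκ).continuousAt.continuousWithinAt)
      (fun κ hκ => (hderiv κ (interior_subset hκ)).differentiableAt.differentiableWithinAt) ?_
    rw [interior_Iio]
    intro κ₁ hκ₁ κ₂ hκ₂ hle
    rw [(hderiv κ₁ hκ₁).deriv, (hderiv κ₂ hκ₂).deriv]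
    have h₂ := sub_mul_pos_of_lt hc hq0 hq1 hκ₂
    have h₂' : 0 < c - κ₂ := sub_pos.2 hκ₂
    refine div_le_div_of_nonneg_left (by nlinarith) (by positivity) ?_
    exact mul_le_mul (by linarith) (by nlinarith) h₂.le (by linarith)
  refine hconvex.congr fun κ hκ => ?_
  exact (Real.log_div (sub_mul_pos_of_lt hc hq0 hq1 hκ).ne' (sub_pos.2 hκ).ne').symm

-- Weighted AM-GM applied to `(a, b) / (a + c, b + d)` and `(c, d) / (a + c, b + d)`, then summed.
lemma rpow_mul_rpow_add_rpow_mul_rpow_le {a b c d w₁ w₂ : ℝ} (ha : 0 < a) (hb : 0 < b)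
    (hc : 0 < c) (hd : 0 < d) (hw₁ : 0 ≤ w₁) (hw₂ : 0 ≤ w₂) (hw : w₁ + w₂ = 1) :
    a ^ w₁ * b ^ w₂ + c ^ w₁ * d ^ w₂ ≤ (a + c) ^ w₁ * (b + d) ^ w₂ := by
  have hac : 0 < a + c := by linarith
  have hbd : 0 < b + d := by linarith
  have hab := geom_mean_le_arith_mean2_weighted hw₁ hw₂ (div_pos ha hac).le (div_pos hb hbd).le hw
  have hcd := geom_mean_le_arith_mean2_weighted hw₁ hw₂ (div_pos hc hac).le (div_pos hd hbd).le hw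
  rw [div_rpow ha.le hac.le, div_rpow hb.le hbd.le] at hab
  rw [div_rpow hc.le hac.le, div_rpow hd.le hbd.le] at hcd
  have hsum : w₁ * (a / (a + c)) + w₂ * (b / (b + d)) + (w₁ * (c / (a + c)) + w₂ * (d / (b + d)))
      = 1 := by
    field_simp
    linear_combination (a + c) * (b + d) * hw
  have hpos : 0 < (a + c) ^ w₁ * (b + d) ^ w₂ := by positivity
  have key : (a ^ w₁ * b ^ w₂ + c ^ w₁ * d ^ w₂) / ((a + c) ^ w₁ * (b + d) ^ w₂) ≤ 1 := by
    calc (a ^ w₁ * b ^ w₂ + c ^ w₁ * d ^ w₂) / ((a + c) ^ w₁ * (b + d) ^ w₂)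
        = a ^ w₁ / (a + c) ^ w₁ * (b ^ w₂ / (b + d) ^ w₂)
          + c ^ w₁ / (a + c) ^ w₁ * (d ^ w₂ / (b + d) ^ w₂) := by field_simp
      _ ≤ 1 := by linarith
  rwa [div_le_one hpos] at key

section ConvexOn

variable {E : Type*} [AddCommMonoid E] [Module ℝ E] {s : Set E}

lemma convexOn_finset_sum {ι : Type*} {t : Finset ι} {f : ι → E → ℝ} (hs : Convex ℝ s)
    (hf : ∀ i ∈ t, ConvexOn ℝ s (f i)) : ConvexOn ℝ s fun x => ∑ i ∈ t, f i x := by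
  have h := Finset.sum_induction f (ConvexOn ℝ s) (fun _ _ => ConvexOn.add) (convexOn_const 0 hs) hf
  simpa only [Finset.sum_fn] using h

lemma ConvexOn.of_tendsto {f : ℕ → E → ℝ} {g : E → ℝ} (hs : Convex ℝ s)
    (hf : ∀ n, ConvexOn ℝ s (f n)) (hg : ∀ x ∈ s, Tendsto (fun n => f n x) atTop (𝓝 (g x))) :
    ConvexOn ℝ s g := by
  refine ⟨hs, fun x hx y hy a b ha hb hab => ?_⟩
  exact le_of_tendsto_of_tendsto' (hg _ (hs hx hy ha hb hab))
    (((hg x hx).const_mul a).add ((hg y hy).const_mul b)) fun n => (hf n).2 hx hy ha hb hab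

theorem ConvexOn.log_exp_add_exp {f g : E → ℝ} (hf : ConvexOn ℝ s f) (hg : ConvexOn ℝ s g) :
    ConvexOn ℝ s fun x => Real.log (Real.exp (f x) + Real.exp (g x)) := by
  refine ⟨hf.1, fun x hx y hy a b ha hb hab => ?_⟩
  have hexp {h : E → ℝ} (hh : ConvexOn ℝ s h) :
      Real.exp (h (a • x + b • y)) ≤ Real.exp (h x) ^ a * Real.exp (h y) ^ b := by
    rw [← Real.exp_mul, ← Real.exp_mul, ← Real.exp_add, mul_comm _ a, mul_comm _ b]
    exact Real.exp_le_exp.2 (hh.2 hx hy ha hb hab)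
  have hprod : Real.exp (f (a • x + b • y)) + Real.exp (g (a • x + b • y)) ≤
      (Real.exp (f x) + Real.exp (g x)) ^ a * (Real.exp (f y) + Real.exp (g y)) ^ b :=
    (add_le_add (hexp hf) (hexp hg)).trans
      (rpow_mul_rpow_add_rpow_mul_rpow_le (by positivity) (by positivity) (by positivity)
        (by positivity) ha hb hab)
  calc Real.log (Real.exp (f (a • x + b • y)) + Real.exp (g (a • x + b • y)))
      ≤ Real.log ((Real.exp (f x) + Real.exp (g x)) ^ a * (Real.exp (f y) + Real.exp (g y)) ^ b) :=
        Real.log_le_log (by positivity) hprod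
    _ = a • Real.log (Real.exp (f x) + Real.exp (g x))
        + b • Real.log (Real.exp (f y) + Real.exp (g y)) := by
        rw [Real.log_mul (by positivity) (by positivity), Real.log_rpow (by positivity),
          Real.log_rpow (by positivity), smul_eq_mul, smul_eq_mul]

end ConvexOn

lemma sK_zero_left (θ : ℝ) : sK 0 θ = θ := by simp [sK]

lemma sK_zero_right (κ : ℝ) : sK κ 0 = 0 := by
  unfold sK; split_ifs <;> simp

lemma sK_pos {κ θ : ℝ} (hκ : κ < π ^ 2) (hθ0 : 0 < θ) (hθ1 : θ ≤ 1) : 0 < sK κ θ := by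
  unfold sK
  split_ifs with hpos hzero
  · have hlt : √κ * θ < π := calc
      √κ * θ ≤ √κ := mul_le_of_le_one_right (sqrt_nonneg κ) hθ1
      _ < π := (sqrt_lt' pi_pos).2 hκ
    exact div_pos (sin_pos_of_pos_of_lt_pi (by positivity) hlt) (sqrt_pos.2 hpos)
  · exact hθ0
  · have hneg : 0 < -κ := neg_pos.2 (lt_of_le_of_ne (not_lt.1 hpos) hzero)
    exact div_pos (sinh_pos_iff.2 (by positivity)) (sqrt_pos.2 hneg)

lemma sigmaR_eq_div (κ s : ℝ) : sigmaR κ s = sK κ s / sK κ 1 := by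
  unfold sigmaR
  split_ifs with h
  · simp [h, sK_zero_left]
  · rfl

lemma sigmaR_zero (κ : ℝ) : sigmaR κ 0 = 0 := by
  simp [sigmaR_eq_div, sK_zero_right]

lemma sigmaR_one {κ : ℝ} (hκ : κ < π ^ 2) : sigmaR κ 1 = 1 := by
  rw [sigmaR_eq_div, div_self (sK_pos hκ one_pos le_rfl).ne']

lemma sigmaR_pos {κ s : ℝ} (hκ : κ < π ^ 2) (hs0 : 0 < s) (hs1 : s ≤ 1) : 0 < sigmaR κ s := by
  rw [sigmaR_eq_div]
  exact div_pos (sK_pos hκ hs0 hs1) (sK_pos hκ one_pos le_rfl)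

lemma exists_sK_eq_sin_div {κ : ℝ} (hκ : κ ≠ 0) :
    ∃ w : ℂ, w ≠ 0 ∧ w ^ 2 = κ ∧ ∀ θ : ℝ, (sK κ θ : ℂ) = Complex.sin (w * θ) / w := by
  rcases hκ.lt_or_gt with hneg | hpos
  · have hr : 0 < √(-κ) := sqrt_pos.2 (neg_pos.2 hneg)
    refine ⟨√(-κ) * Complex.I, by simp [hr.ne'], ?_, fun θ => ?_⟩
    · rw [mul_pow, Complex.I_sq, ← Complex.ofReal_pow, sq_sqrt (neg_nonneg.2 hneg.le)]
      push_cast; ring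
    · rw [sK, if_neg hneg.not_gt, if_neg hneg.ne, mul_right_comm, ← Complex.ofReal_mul,
        Complex.sin_mul_I, mul_div_mul_right _ _ Complex.I_ne_zero]
      push_cast; ring
  · refine ⟨√κ, by simp [(sqrt_pos.2 hpos).ne'], ?_, fun θ => ?_⟩
    · rw [← Complex.ofReal_pow, sq_sqrt hpos.le]
    · rw [sK, if_pos hpos]
      push_cast; ring

theorem tendsto_sK_euler_prod (κ θ : ℝ) :
    Tendsto (fun n : ℕ => θ * ∏ j ∈ Finset.range n, (1 - θ ^ 2 * κ / (((j : ℝ) + 1) ^ 2 * π ^ 2)))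
      atTop (𝓝 (sK κ θ)) := by
  rcases eq_or_ne κ 0 with rfl | hκ
  · simp [sK_zero_left]
  obtain ⟨w, hw0, hw2, hsK⟩ := exists_sK_eq_sin_div hκ
  rw [← tendsto_ofReal_iff, hsK]
  have hsin := (Complex.tendsto_euler_sin_prod (w * θ / π)).div_const w
  rw [mul_div_cancel₀ _ (Complex.ofReal_ne_zero.2 pi_ne_zero)] at hsin
  refine hsin.congr fun n => ?_
  push_cast
  rw [← hw2]
  field_simp

lemma pi_sq_le_sq_mul_pi_sq (j : ℕ) : π ^ 2 ≤ ((j : ℝ) + 1) ^ 2 * π ^ 2 :=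
  le_mul_of_one_le_left (by positivity) (one_le_pow₀ (by linarith [j.cast_nonneg (α := ℝ)]))

lemma tendsto_log_sigmaR {κ s : ℝ} (hκ : κ < π ^ 2) (hs0 : 0 < s) (hs1 : s ≤ 1) :
    Tendsto (fun n : ℕ => Real.log s + ∑ j ∈ Finset.range n,
        Real.log ((((j : ℝ) + 1) ^ 2 * π ^ 2 - s ^ 2 * κ) / (((j : ℝ) + 1) ^ 2 * π ^ 2 - κ)))
      atTop (𝓝 (Real.log (sigmaR κ s))) := by
  have hs2 : s ^ 2 ≤ 1 := pow_le_one₀ hs0.le hs1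
  have hfactor (j : ℕ) :
      0 < (((j : ℝ) + 1) ^ 2 * π ^ 2 - s ^ 2 * κ) / (((j : ℝ) + 1) ^ 2 * π ^ 2 - κ) := by
    have hκj := hκ.trans_le (pi_sq_le_sq_mul_pi_sq j)
    exact div_pos (sub_mul_pos_of_lt (by positivity) (sq_nonneg s) hs2 hκj) (sub_pos.2 hκj)
  have hratio := (tendsto_sK_euler_prod κ s).div (tendsto_sK_euler_prod κ 1)
    (sK_pos hκ one_pos le_rfl).ne'
  rw [← sigmaR_eq_div] at hratio
  refine ((continuousAt_log (sigmaR_pos hκ hs0 hs1).ne').tendsto.comp hratio).congr fun n => ?_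
  have hprod : (∏ j ∈ Finset.range n, (1 - s ^ 2 * κ / (((j : ℝ) + 1) ^ 2 * π ^ 2))) /
      ∏ j ∈ Finset.range n, (1 - 1 ^ 2 * κ / (((j : ℝ) + 1) ^ 2 * π ^ 2)) =
      ∏ j ∈ Finset.range n,
        (((j : ℝ) + 1) ^ 2 * π ^ 2 - s ^ 2 * κ) / (((j : ℝ) + 1) ^ 2 * π ^ 2 - κ) := by
    rw [← Finset.prod_div_distrib]
    refine Finset.prod_congr rfl fun j _ => ?_
    field_simp
  rw [Function.comp_apply, Pi.div_apply, one_mul, mul_div_assoc, hprod,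
    Real.log_mul hs0.ne' (Finset.prod_pos fun j _ => hfactor j).ne',
    Real.log_prod fun j _ => (hfactor j).ne']

lemma convexOn_log_sigmaR {s : ℝ} (hs0 : 0 < s) (hs1 : s ≤ 1) :
    ConvexOn ℝ (Iio (π ^ 2)) fun κ => Real.log (sigmaR κ s) := by
  have hterm (j : ℕ) : ConvexOn ℝ (Iio (π ^ 2)) fun κ =>
      Real.log ((((j : ℝ) + 1) ^ 2 * π ^ 2 - s ^ 2 * κ) / (((j : ℝ) + 1) ^ 2 * π ^ 2 - κ)) :=
    (convexOn_log_div_sub (by positivity) (sq_nonneg s) (pow_le_one₀ hs0.le hs1)).subset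
      (Iio_subset_Iio (pi_sq_le_sq_mul_pi_sq j)) (convex_Iio _)
  exact ConvexOn.of_tendsto (convex_Iio _)
    (fun n => (convexOn_const _ (convex_Iio _)).add
      (convexOn_finset_sum (convex_Iio _) fun j _ => hterm j))
    fun κ hκ => tendsto_log_sigmaR hκ hs0 hs1

/-- **Lemma (convexity of `G_t`).**
For every fixed `t ∈ [0,1]` the function
`G_t(x,y,κ) = log (σ_κ^{(1-t)}(1) e^x + σ_κ^{(t)}(1) e^y)`
is jointly convex on `ℝ × ℝ × (-∞, π²)`. -/
theorem Gt_convex (t : ℝ) (ht : t ∈ Set.Icc (0:ℝ) 1) :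
    ConvexOn ℝ {p : ℝ × ℝ × ℝ | p.2.2 < Real.pi ^ 2}
      (fun p : ℝ × ℝ × ℝ =>
        Real.log (sigmaR p.2.2 (1 - t) * Real.exp p.1 +
          sigmaR p.2.2 t * Real.exp p.2.1)) := by
  set S := {p : ℝ × ℝ × ℝ | p.2.2 < π ^ 2}
  let κ : ℝ × ℝ × ℝ →ₗ[ℝ] ℝ := (LinearMap.snd ℝ ℝ ℝ).comp (LinearMap.snd ℝ ℝ (ℝ × ℝ))
  have hS : Convex ℝ S := (convex_Iio _).linear_preimage κ
  have hx : ConvexOn ℝ S fun p => p.1 := (LinearMap.fst ℝ ℝ (ℝ × ℝ)).convexOn hS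
  have hy : ConvexOn ℝ S fun p => p.2.1 :=
    ((LinearMap.fst ℝ ℝ ℝ).comp (LinearMap.snd ℝ ℝ (ℝ × ℝ))).convexOn hS
  have hlog (s : ℝ) (hs0 : 0 < s) (hs1 : s ≤ 1) :
      ConvexOn ℝ S fun p => Real.log (sigmaR p.2.2 s) :=
    (convexOn_log_sigmaR hs0 hs1).comp_linearMap κ
  obtain ⟨ht0, ht1⟩ := ht
  rcases ht0.eq_or_lt with rfl | ht0
  · exact hx.congr fun p hp => by simp [sigmaR_one hp, sigmaR_zero]
  rcases ht1.eq_or_lt with rfl | ht1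
  · exact hy.congr fun p hp => by simp [sigmaR_one hp, sigmaR_zero]
  refine ((hx.add (hlog (1 - t) (by linarith) (by linarith))).log_exp_add_exp
    (hy.add (hlog t ht0 ht1.le))).congr fun p hp => ?_
  simp only [Pi.add_apply, Real.exp_add,
    Real.exp_log (sigmaR_pos hp (by linarith) (by linarith : 1 - t ≤ 1)),
    Real.exp_log (sigmaR_pos hp ht0 ht1.le)]
  congr 1
  ring
end
end
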